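/- arXiv:1809.04417 — 3 statements merged into one kernel-verified Lean document; each statement's English description precedes it below -/
import Mathlib

section
/- Let A be a unital C*-algebra and let ε : A → ℂ be a character. Let u : A → ℂ be a non-zero bounded linear functional such that u(1) = 0 and u(x*x) is a nonnegative real number for every x ∈ A with ε(x*x) = 0. Then there exist a real number r > 0 and a state v on A such that u = r·(v − ε). -/
/-!
Write `x = y + λ • 1` with `λ = ε x` and `ε y = 0`. On `ker ε` the form `(a, b) ↦ u (a⋆ b)` is
positive semidefinite, hence Hermitian and subject to Cauchy–Schwarz. The elements
`e = (y y⋆)(s + y y⋆)⁻¹` lie in `ker ε`, have norm at most `1`, and `‖y - e y‖² ≤ s / 4`; letting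
`s → 0` gives `u (y⋆) = conj (u y)` and `|u y|² ≤ ‖u‖ u (y⋆ y)`. Then
`‖u‖ ε (x⋆ x) + u (x⋆ x) = ‖u‖ |λ|² + u (y⋆ y) + 2 Re (conj λ · u y) ≥ 0`,
so `v = ε + u / ‖u‖` is a state and `u = ‖u‖ (v - ε)`.
-/

open scoped ComplexOrder CStarAlgebra
open Filter Topology

section PositiveForm

variable {A F : Type*} [Ring A] [StarRing A] [Algebra ℂ A] [StarModule ℂ A]
  [FunLike F A ℂ] [LinearMapClass F ℂ A ℂ] {u : F} {S : Submodule ℂ A}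

theorem conj_apply_star_mul_of_nonneg_on (hS : ∀ x ∈ S, 0 ≤ u (star x * x)) {a b : A}
    (ha : a ∈ S) (hb : b ∈ S) : starRingEnd ℂ (u (star a * b)) = u (star b * a) := by
  have expand : ∀ c : ℂ, u (star (a + c • b) * (a + c • b)) =
      u (star a * a) + c * u (star a * b) + starRingEnd ℂ c * u (star b * a)
        + starRingEnd ℂ c * c * u (star b * b) := by
    intro c
    simp only [star_add, star_smul, add_mul, mul_add, smul_mul_assoc, mul_smul_comm,
      map_add, map_smul, smul_eq_mul, Complex.star_def]
    ring
  have real : ∀ x ∈ S, (u (star x * x)).im = 0 := fun x hx =>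
    (Complex.nonneg_iff.mp (hS x hx)).2.symm
  have h1 := real _ (S.add_mem ha (S.smul_mem 1 hb))
  have hI := real _ (S.add_mem ha (S.smul_mem Complex.I hb))
  rw [expand] at h1 hI
  have hA := real a ha
  have hB := real b hb
  simp only [one_mul, map_one, mul_one, Complex.add_im, Complex.conj_I, neg_mul, Complex.I_mul_I,
    neg_neg, Complex.mul_im, Complex.I_re, zero_mul, Complex.I_im, zero_add, Complex.neg_im,
    Complex.ext_iff, Complex.conj_re, Complex.conj_im] at h1 hI ⊢
  constructor <;> linarith

-- Never an instance: `S` already carries the norm of `A`.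
variable (u S) in
noncomputable abbrev preInnerCoreOfNonnegOn (hS : ∀ x ∈ S, 0 ≤ u (star x * x)) :
    PreInnerProductSpace.Core ℂ S where
  inner a b := u (star (a : A) * b)
  conj_inner_symm a b := conj_apply_star_mul_of_nonneg_on hS b.2 a.2
  re_inner_nonneg a := (Complex.nonneg_iff.mp (hS a a.2)).1
  add_left a b c := by simp [add_mul]
  smul_left a b c := by simp

theorem norm_apply_star_mul_sq_le_of_nonneg_on (hS : ∀ x ∈ S, 0 ≤ u (star x * x)) {a b : A}
    (ha : a ∈ S) (hb : b ∈ S) :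
    ‖u (star a * b)‖ ^ 2 ≤ (u (star a * a)).re * (u (star b * b)).re := by
  let c := preInnerCoreOfNonnegOn u S hS
  have h := InnerProductSpace.Core.inner_mul_inner_self_le (c := c) ⟨a, ha⟩ ⟨b, hb⟩
  rwa [InnerProductSpace.Core.norm_inner_symm (c := c) ⟨b, hb⟩, ← sq] at h

end PositiveForm

section ApproximateUnit

variable {A : Type*} [CStarAlgebra A]

theorem spectrum_mul_star_self_nonneg (y : A) : ∀ t ∈ spectrum ℝ (y * star y), 0 ≤ t := by
  simpa only [star_star] using spectrum_star_mul_self_nonneg (b := star y)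

theorem StarAlgHom.map_cfc_eq_zero {B : Type*} [CStarAlgebra B] (φ : A →⋆ₐ[ℂ] B) {f : ℝ → ℝ}
    {a : A} (hf : ContinuousOn f (spectrum ℝ a)) (hf0 : f 0 = 0) (ha : IsSelfAdjoint a)
    (hφa : φ a = 0) : φ (cfc f a) = 0 := by
  rw [φ.map_cfc f a hf, hφa, cfc_apply_zero, hf0, map_zero]

theorem continuousOn_div_add_of_spectrum_mul_star (y : A) {s : ℝ} (hs : 0 < s) :
    ContinuousOn (fun t : ℝ => t / (s + t)) (spectrum ℝ (y * star y)) := by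
  refine continuousOn_id.div (by fun_prop) fun t ht => ?_
  have := spectrum_mul_star_self_nonneg y t ht
  positivity

theorem norm_cfc_div_add_le_one (y : A) {s : ℝ} (hs : 0 < s) :
    ‖cfc (fun t : ℝ => t / (s + t)) (y * star y)‖ ≤ 1 := by
  refine norm_cfc_le zero_le_one fun t ht => ?_
  have := spectrum_mul_star_self_nonneg y t ht
  rw [Real.norm_of_nonneg (by positivity), div_le_one (by positivity)]
  linarith

theorem norm_sub_cfc_div_add_mul_sq_le (y : A) {s : ℝ} (hs : 0 < s) :
    ‖y - cfc (fun t : ℝ => t / (s + t)) (y * star y) * y‖ ^ 2 ≤ s / 4 := by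
  set a := y * star y
  have hspec := spectrum_mul_star_self_nonneg y
  have hpos : ∀ t ∈ spectrum ℝ a, 0 < s + t := fun t ht => by
    have := hspec t ht; positivity
  have hf := continuousOn_div_add_of_spectrum_mul_star y hs
  have hg : ContinuousOn (fun t : ℝ => s / (s + t)) (spectrum ℝ a) :=
    continuousOn_const.div (by fun_prop) fun t ht => (hpos t ht).ne'
  have hcompl : 1 - cfc (fun t : ℝ => t / (s + t)) a = cfc (fun t : ℝ => s / (s + t)) a := by
    rw [← cfc_const_one ℝ a, ← cfc_sub _ _ a (by fun_prop) hf]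
    refine cfc_congr fun t ht => ?_
    have := (hpos t ht).ne'
    field_simp
    ring
  have hsa : IsSelfAdjoint (cfc (fun t : ℝ => s / (s + t)) a) := cfc_predicate _ _
  calc ‖y - cfc (fun t : ℝ => t / (s + t)) a * y‖ ^ 2
      = ‖cfc (fun t : ℝ => s / (s + t)) a * a * cfc (fun t : ℝ => s / (s + t)) a‖ := by
        rw [← one_sub_mul, hcompl, sq, ← CStarRing.norm_self_mul_star, star_mul, hsa.star_eq]
        simp only [a, mul_assoc]
    _ = ‖cfc (fun t : ℝ => s / (s + t) * t * (s / (s + t))) a‖ := by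
        rw [cfc_mul (fun t => s / (s + t) * t) _ a (hg.mul continuousOn_id) hg,
          cfc_mul _ _ a hg, cfc_id' ℝ a]
    _ ≤ s / 4 := by
        refine norm_cfc_le (by positivity) fun t ht => ?_
        have := hpos t ht
        have := hspec t ht
        rw [Real.norm_of_nonneg (by positivity), div_mul_eq_mul_div, div_mul_div_comm,
          div_le_div_iff₀ (by positivity) (by norm_num)]
        nlinarith [sq_nonneg (s - t)]

theorem exists_tendsto_mul_of_map_eq_zero {B : Type*} [CStarAlgebra B] (φ : A →⋆ₐ[ℂ] B)
    {y : A} (hy : φ y = 0) :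
    ∃ e : ℕ → A, (∀ n, IsSelfAdjoint (e n) ∧ ‖e n‖ ≤ 1 ∧ φ (e n) = 0) ∧
      Tendsto (fun n => e n * y) atTop (𝓝 y) := by
  set s : ℕ → ℝ := fun n => 4 / ((n : ℝ) + 1) ^ 2
  have hs : ∀ n, 0 < s n := fun n => by positivity
  refine ⟨fun n => cfc (fun t : ℝ => t / (s n + t)) (y * star y), fun n => ⟨cfc_predicate _ _,
    norm_cfc_div_add_le_one y (hs n), ?_⟩, ?_⟩
  · exact φ.map_cfc_eq_zero (continuousOn_div_add_of_spectrum_mul_star y (hs n)) (zero_div _)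
      (.mul_star_self y) (by rw [map_mul, hy, zero_mul])
  · rw [tendsto_iff_norm_sub_tendsto_zero]
    refine squeeze_zero (fun n => norm_nonneg _) (fun n => ?_)
      tendsto_one_div_add_atTop_nhds_zero_nat
    rw [norm_sub_rev]
    refine le_of_sq_le_sq ?_ (by positivity)
    calc _ ≤ s n / 4 := norm_sub_cfc_div_add_mul_sq_le y (hs n)
      _ = (1 / ((n : ℝ) + 1)) ^ 2 := by simp only [s]; field_simp

end ApproximateUnit

theorem Complex.mul_norm_sq_add_add_two_mul_re_conj_mul_nonneg {c U : ℝ} (hc : 0 ≤ c)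
    (hU : 0 ≤ U) {w : ℂ} (hw : ‖w‖ ^ 2 ≤ c * U) (z : ℂ) :
    0 ≤ c * ‖z‖ ^ 2 + U + 2 * (starRingEnd ℂ z * w).re := by
  have hre : -(‖z‖ * ‖w‖) ≤ (starRingEnd ℂ z * w).re := by
    have := Complex.abs_re_le_norm (starRingEnd ℂ z * w)
    rw [norm_mul, Complex.norm_conj] at this
    linarith [neg_abs_le (starRingEnd ℂ z * w).re]
  rcases hc.eq_or_lt with rfl | hc
  · have : ‖w‖ = 0 := by nlinarith [norm_nonneg w]
    nlinarith [norm_nonneg z]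
  · refine (mul_nonneg_iff_of_pos_left hc).mp ?_
    nlinarith [sq_nonneg (c * ‖z‖ - ‖w‖), norm_nonneg z]

section Character

variable {A : Type*} [CStarAlgebra A] {ε : A →⋆ₐ[ℂ] ℂ} {u : A →L[ℂ] ℂ}

theorem apply_star_eq_conj_of_nonneg_on_ker (hpos : ∀ x, ε x = 0 → 0 ≤ u (star x * x)) {y : A}
    (hy : ε y = 0) : u (star y) = starRingEnd ℂ (u y) := by
  obtain ⟨e, he, hlim⟩ := exists_tendsto_mul_of_map_eq_zero ε hy
  have hS : ∀ x ∈ LinearMap.ker (ε : A →ₗ[ℂ] ℂ), 0 ≤ u (star x * x) := hpos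
  have hsym : ∀ n, starRingEnd ℂ (u (e n * y)) = u (star y * e n) := fun n => by
    simpa only [(he n).1.star_eq] using conj_apply_star_mul_of_nonneg_on hS (he n).2.2 hy
  have h1 : Tendsto (fun n => u (star y * e n)) atTop (𝓝 (u (star y))) := by
    have := (u.continuous.comp continuous_star).tendsto y |>.comp hlim
    simpa only [Function.comp_def, star_mul, (he _).1.star_eq] using this
  have h2 : Tendsto (fun n => u (star y * e n)) atTop (𝓝 (starRingEnd ℂ (u y))) := by
    have := (Complex.continuous_conj.comp u.continuous).tendsto y |>.comp hlim
    simpa only [Function.comp_def, hsym] using this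
  exact tendsto_nhds_unique h1 h2

theorem norm_apply_sq_le_of_nonneg_on_ker (hpos : ∀ x, ε x = 0 → 0 ≤ u (star x * x)) {y : A}
    (hy : ε y = 0) : ‖u y‖ ^ 2 ≤ ‖u‖ * (u (star y * y)).re := by
  obtain ⟨e, he, hlim⟩ := exists_tendsto_mul_of_map_eq_zero ε hy
  have hS : ∀ x ∈ LinearMap.ker (ε : A →ₗ[ℂ] ℂ), 0 ≤ u (star x * x) := hpos
  have hlim' : Tendsto (fun n => ‖u (e n * y)‖ ^ 2) atTop (𝓝 (‖u y‖ ^ 2)) :=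
    ((continuous_norm.pow 2).comp u.continuous).tendsto y |>.comp hlim
  refine le_of_tendsto' hlim' fun n => ?_
  obtain ⟨hsa, hnorm, hker⟩ := he n
  have hee : (u (e n * e n)).re ≤ ‖u‖ := calc
    (u (e n * e n)).re ≤ ‖u (e n * e n)‖ := Complex.re_le_norm _
    _ ≤ ‖u‖ * ‖e n * e n‖ := u.le_opNorm _
    _ ≤ ‖u‖ * 1 := by
      gcongr
      exact (norm_mul_le _ _).trans (mul_le_one₀ hnorm (norm_nonneg _) hnorm)
    _ = ‖u‖ := mul_one _
  have hyy : 0 ≤ (u (star y * y)).re := (Complex.nonneg_iff.mp (hpos y hy)).1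
  calc ‖u (e n * y)‖ ^ 2 ≤ (u (e n * e n)).re * (u (star y * y)).re := by
        simpa only [hsa.star_eq] using norm_apply_star_mul_sq_le_of_nonneg_on hS hker hy
    _ ≤ ‖u‖ * (u (star y * y)).re := by gcongr

theorem norm_mul_map_add_apply_star_mul_self_nonneg (hpos : ∀ x, ε x = 0 → 0 ≤ u (star x * x))
    (hu1 : u 1 = 0) (x : A) : 0 ≤ (‖u‖ : ℂ) * ε (star x * x) + u (star x * x) := by
  set z := ε x
  set y := x - z • 1
  have hy : ε y = 0 := by simp [y, z]
  have hyy := hpos y hy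
  have hεxx : ε (star x * x) = (‖z‖ ^ 2 : ℝ) := by
    rw [map_mul, map_star, Complex.star_def, Complex.conj_mul', Complex.ofReal_pow]
  have huxx : u (star x * x) = ((u (star y * y)).re + 2 * (starRingEnd ℂ z * u y).re : ℝ) := by
    have hx : x = y + z • 1 := by simp [y]
    rw [hx, star_add, star_smul, star_one, add_mul, mul_add, mul_add]
    simp only [smul_mul_assoc, mul_smul_comm, one_mul, mul_one, smul_smul, map_add, map_smul,
      hu1, apply_star_eq_conj_of_nonneg_on_ker hpos hy, smul_eq_mul, Complex.star_def]
    rw [Complex.ofReal_add, ← Complex.eq_re_of_ofReal_le hyy, ← Complex.add_conj]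
    simp only [map_mul, Complex.conj_conj]
    ring
  rw [hεxx, huxx, ← Complex.ofReal_mul, ← Complex.ofReal_add, Complex.zero_le_real, ← add_assoc]
  exact Complex.mul_norm_sq_add_add_two_mul_re_conj_mul_nonneg (norm_nonneg u)
    (Complex.nonneg_iff.mp hyy).1 (norm_apply_sq_le_of_nonneg_on_ker hpos hy) z

end Character

/-- If `ε` is a character on a unital C*-algebra `A` and `u` is a non-zero bounded linear
functional with `u(1) = 0` which is positive on the kernel of `ε` (i.e. `u(x*x) ≥ 0`
whenever `ε(x*x) = 0`), then `u = r(v − ε)` for some `r > 0` and some state `v` on `A`. -/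
theorem conditionally_positive_wrt_character_eq_scaled_state_minus_character
    {A : Type*} [NormedRing A] [StarRing A] [CStarRing A] [NormedAlgebra ℂ A]
    [CompleteSpace A] [StarModule ℂ A]
    (ε : A →⋆ₐ[ℂ] ℂ) (u : A →L[ℂ] ℂ) (hu : u ≠ 0) (hu1 : u 1 = 0)
    (hcpd : ∀ x : A, ε (star x * x) = 0 → 0 ≤ u (star x * x)) :
    ∃ (r : ℝ) (v : A →L[ℂ] ℂ), 0 < r ∧ (∀ x : A, 0 ≤ v (star x * x)) ∧ v 1 = 1 ∧
      ∀ x : A, u x = r * (v x - ε x) := by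
  let _ : CStarAlgebra A := {}
  have hpos : ∀ x, ε x = 0 → 0 ≤ u (star x * x) := fun x hx =>
    hcpd x (by rw [map_mul, hx, mul_zero])
  have hr : 0 < ‖u‖ := norm_pos_iff.mpr hu
  let εL : A →L[ℂ] ℂ := ⟨ε.toLinearMap, map_continuous ε⟩
  have hr' : (‖u‖ : ℂ) ≠ 0 := Complex.ofReal_ne_zero.mpr hr.ne'
  have hv : ∀ x, (εL + (‖u‖⁻¹ : ℂ) • u) x = (‖u‖⁻¹ : ℂ) * ((‖u‖ : ℂ) * ε x + u x) := fun x => by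
    change ε x + (‖u‖⁻¹ : ℂ) * u x = _
    field_simp
  refine ⟨‖u‖, εL + (‖u‖⁻¹ : ℂ) • u, hr, fun x => ?_, ?_, fun x => ?_⟩
  · rw [hv]
    exact mul_nonneg (by positivity) (norm_mul_map_add_apply_star_mul_self_nonneg hpos hu1 x)
  · rw [hv, hu1, map_one, mul_one, add_zero, inv_mul_cancel₀ hr']
  · rw [hv]
    field_simp
    ring
end

section
/- Let S be a nonempty compact Hausdorff topological semigroup (S carries an associative multiplication that is jointly continuous). Let ω ∈ S be such that for every positive integer n there exists a ∈ S with aⁿ = ω. Then for every integer N ≥ 2 there exists a sequence (b_j)_{j≥0} in S with b₀ = ω and b_{j−1} = (b_j)^N for all j ≥ 1. -/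
/-- Powers in a semigroup: `spow a n = a^(n+1)`. -/
def spow {S : Type*} [Semigroup S] (a : S) : ℕ → S
  | 0 => a
  | n + 1 => spow a n * a

lemma spow_mul_spow {S : Type*} [Semigroup S] (a : S) (p q : ℕ) :
    spow a p * spow a q = spow a (p + q + 1) := by
  induction q with
  | zero => rfl
  | succ q ih =>
    show spow a p * (spow a q * a) = _
    rw [← mul_assoc, ih]
    rfl

lemma spow_spow {S : Type*} [Semigroup S] (a : S) (m n : ℕ) :
    spow (spow a m) n = spow a (m * n + m + n) := by
  induction n with
  | zero => simp [spow]
  | succ n ih =>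
    show spow (spow a m) n * spow a m = _
    rw [ih, spow_mul_spow]
    ring_nf

lemma continuous_spow {S : Type*} [Semigroup S] [TopologicalSpace S] [ContinuousMul S]
    (n : ℕ) : Continuous fun a : S => spow a n := by
  induction n with
  | zero => exact continuous_id
  | succ n ih => exact ih.mul continuous_id

/-- In a nonempty compact Hausdorff topological semigroup, an element `ω` admitting `n`-th
roots for every `n ≥ 1` admits, for every `N ≥ 2`, a sequence `(b_j)` of iterated `N`-th
roots: `b₀ = ω` and `b_{j-1} = (b_j)^N` for all `j ≥ 1`. -/
theorem exists_iterated_root_sequence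
    {S : Type*} [Semigroup S] [TopologicalSpace S] [CompactSpace S] [T2Space S]
    [ContinuousMul S] [Nonempty S]
    (ω : S) (hroot : ∀ n : ℕ, ∃ a : S, spow a n = ω) :
    ∀ N : ℕ, 2 ≤ N → ∃ b : ℕ → S, b 0 = ω ∧ ∀ j : ℕ, b j = spow (b (j + 1)) (N - 1) := by
  intro N hN
  set C : ℕ → Set (ℕ → S) :=
    fun k => {b | b 0 = ω ∧ ∀ j < k, b j = spow (b (j + 1)) (N - 1)} with hC
  have hsub : ∀ k, C (k + 1) ⊆ C k := by
    intro k b hb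
    exact ⟨hb.1, fun j hj => hb.2 j (by omega)⟩
  have hclosed : ∀ k, IsClosed (C k) := by
    intro k
    have : C k = {b : ℕ → S | b 0 = ω} ∩
        ⋂ j, ⋂ _ : j < k, {b : ℕ → S | b j = spow (b (j + 1)) (N - 1)} := by
      ext b
      simp [hC, Set.mem_iInter]
    rw [this]
    exact (isClosed_eq (continuous_apply 0) continuous_const).inter
      (isClosed_iInter fun j => isClosed_iInter fun _ =>
        isClosed_eq (continuous_apply j)
          ((continuous_spow (N - 1)).comp (continuous_apply (j + 1))))
  have hne : ∀ k, (C k).Nonempty := by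
    intro k
    obtain ⟨a, ha⟩ := hroot (N ^ k - 1)
    refine ⟨fun j => spow a (N ^ (k - j) - 1), ?_, ?_⟩
    · simpa using ha
    · intro j hj
      show spow a (N ^ (k - j) - 1) = spow (spow a (N ^ (k - (j + 1)) - 1)) (N - 1)
      rw [spow_spow]
      congr 1
      have h1 : 1 ≤ N ^ (k - (j + 1)) := Nat.one_le_pow _ _ (by omega)
      obtain ⟨m, hm⟩ : ∃ m, N ^ (k - (j + 1)) = m + 1 := ⟨_, (Nat.succ_pred_eq_of_pos h1).symm⟩
      have h2 : N ^ (k - j) = N ^ (k - (j + 1)) * N := by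
        rw [← pow_succ]
        congr 1
        omega
      rw [h2, hm]
      cases' Nat.exists_eq_add_of_le hN with n hn
      subst hn
      have key : (m + 1) * (2 + n) = (m + 1 - 1) * (2 + n - 1) + (m + 1 - 1) + (2 + n - 1) + 1 := by
        have h3 : 2 + n - 1 = n + 1 := by omega
        have h4 : m + 1 - 1 = m := by omega
        rw [h3, h4]; ring
      rw [key, Nat.add_sub_cancel]
  obtain ⟨b, hb⟩ := IsCompact.nonempty_iInter_of_sequence_nonempty_isCompact_isClosed
    C hsub hne ((hclosed 0).isCompact) hclosed
  simp only [Set.mem_iInter] at hb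
  exact ⟨b, (hb 0).1, fun j => (hb (j + 1)).2 j (by omega)⟩
end

section
/- Let A be a unital C*-algebra, let ε : A → ℂ be a character, and let e ∈ A be a nonzero central projection (e = e* = e², and ex = xe for all x ∈ A) such that e·x·e = ε(x)·e for all x ∈ A. Then for every state u on A, u(e) is a real number in [0, 1] and ‖u − ε‖ = 2(1 − u(e)), where the norm is the norm of bounded linear functionals on A. -/
/-! With `f = 1 - e`, centrality of `e` and `exe = ε(x)e` give `fxf = x - ε(x)e`, hence
`u(x) - ε(x) = u(fxf) - u(f)ε(x)`. Cauchy–Schwarz in the GNS space of `u` bounds `|u(fxf)|` by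
`u(f)‖x‖`, and characters are contractive, so `‖u - ε‖ ≤ 2u(f) = 2(1 - u(e))`. The self-adjoint
unitary `2e - 1` attains this bound. -/

open scoped ComplexOrder InnerProductSpace

namespace PositiveLinearMap

variable {A : Type*} [CStarAlgebra A] [PartialOrder A] [StarOrderedRing A]

theorem norm_apply_star_mul_mul_le (f : A →ₚ[ℂ] ℂ) (a x : A) :
    ‖f (star a * x * a)‖ ≤ ‖x‖ * (f (star a * a)).re := by
  set a' := f.toPreGNS a
  have hnorm : ‖a'‖ ^ 2 = (f (star a * a)).re := by
    have := congrArg Complex.re (f.preGNS_norm_sq a')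
    rwa [← Complex.ofReal_pow, Complex.ofReal_re] at this
  have hxa : ‖f.toPreGNS (x * a)‖ ≤ ‖x‖ * ‖a'‖ :=
    (f.leftMulMapPreGNS x).le_of_opNorm_le (LinearMap.mkContinuous_norm_le _ (norm_nonneg x) _) a'
  calc ‖f (star a * x * a)‖ = ‖⟪a', f.toPreGNS (x * a)⟫_ℂ‖ := by rw [mul_assoc]; rfl
    _ ≤ ‖a'‖ * (‖x‖ * ‖a'‖) := (norm_inner_le_norm _ _).trans (by gcongr)
    _ = ‖x‖ * (f (star a * a)).re := by rw [← hnorm]; ring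

end PositiveLinearMap

theorem norm_apply_star_mul_mul_le_of_nonneg {A F : Type*} [CStarAlgebra A] [FunLike F A ℂ]
    [LinearMapClass F ℂ A ℂ] (u : F) (hu : ∀ x, 0 ≤ u (star x * x)) (a x : A) :
    ‖u (star a * x * a)‖ ≤ ‖x‖ * (u (star a * a)).re := by
  let := CStarAlgebra.spectralOrder A
  have := CStarAlgebra.spectralOrderedRing A
  exact PositiveLinearMap.norm_apply_star_mul_mul_le
    (.mk₀ (u : A →ₗ[ℂ] ℂ) fun y hy ↦ by
      obtain ⟨s, rfl⟩ := CStarAlgebra.nonneg_iff_eq_star_mul_self.mp hy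
      exact hu s) a x

theorem IsIdempotentElem.one_sub_mul_mul_one_sub {R : Type*} [Ring R] {e x : R}
    (he : IsIdempotentElem e) (hx : Commute e x) : (1 - e) * x * (1 - e) = x - e * x * e := by
  have hx' : Commute (1 - e) x := (Commute.one_left x).sub_left hx
  calc (1 - e) * x * (1 - e) = (1 - e) * (1 - e) * x := by rw [mul_assoc, ← hx'.eq, ← mul_assoc]
    _ = x - e * x := by rw [he.one_sub.eq, sub_mul, one_mul]
    _ = x - e * x * e := by rw [mul_assoc, ← hx.eq, ← mul_assoc, he.eq]

theorem apply_sub_eq_apply_one_sub_mul_mul_one_sub {A F : Type*} [Ring A] [Module ℂ A]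
    [FunLike F A ℂ] [LinearMapClass F ℂ A ℂ] (u : F) (hu1 : u 1 = 1) (ε : A → ℂ) {e x : A}
    (he : IsIdempotentElem e) (hx : Commute e x) (heε : e * x * e = ε x • e) :
    u x - ε x = u ((1 - e) * x * (1 - e)) - u (1 - e) * ε x := by
  rw [he.one_sub_mul_mul_one_sub hx, heε, map_sub, map_sub, map_smul, hu1, smul_eq_mul]
  ring

theorem IsStarProjection.exists_apply_eq_ofReal {A F : Type*} [Ring A] [StarRing A] [Module ℂ A]
    [FunLike F A ℂ] [LinearMapClass F ℂ A ℂ] (u : F) (hu : ∀ x, 0 ≤ u (star x * x))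
    (hu1 : u 1 = 1) {p : A} (hp : IsStarProjection p) : ∃ t : ℝ, u p = t ∧ 0 ≤ t ∧ t ≤ 1 := by
  have hp0 := hu p
  have hp1 := hu (1 - p)
  rw [hp.isSelfAdjoint.star_eq, hp.isIdempotentElem.eq] at hp0
  rw [hp.one_sub.isSelfAdjoint.star_eq, hp.one_sub.isIdempotentElem.eq, map_sub, hu1] at hp1
  have hup : u p = (u p).re := Complex.eq_re_of_ofReal_le (by exact_mod_cast hp0)
  rw [hup] at hp0 hp1
  exact ⟨_, hup, Complex.zero_le_real.mp hp0, by exact_mod_cast sub_nonneg.mp hp1⟩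

theorem norm_sub_le_two_mul_norm_apply_one_sub {A : Type*} [CStarAlgebra A] (u ε : A →L[ℂ] ℂ)
    (hu : ∀ x, 0 ≤ u (star x * x)) (hu1 : u 1 = 1) (hε : ∀ x, ‖ε x‖ ≤ ‖x‖) {e : A}
    (he : IsStarProjection e) (hec : ∀ x, Commute e x) (heε : ∀ x, e * x * e = ε x • e) :
    ‖u - ε‖ ≤ 2 * ‖u (1 - e)‖ := by
  refine ContinuousLinearMap.opNorm_le_bound _ (by positivity) fun x ↦ ?_
  have hcorner := norm_apply_star_mul_mul_le_of_nonneg u hu (1 - e) x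
  rw [he.one_sub.isSelfAdjoint.star_eq, he.one_sub.isIdempotentElem.eq] at hcorner
  calc ‖(u - ε) x‖ = ‖u ((1 - e) * x * (1 - e)) - u (1 - e) * ε x‖ := by
        rw [sub_apply,
          apply_sub_eq_apply_one_sub_mul_mul_one_sub u hu1 ε he.isIdempotentElem (hec x) (heε x)]
    _ ≤ ‖x‖ * ‖u (1 - e)‖ + ‖u (1 - e)‖ * ‖x‖ := by
        refine norm_sub_le_of_le (hcorner.trans ?_) ?_
        · gcongr; exact Complex.re_le_norm _
        · rw [norm_mul]; gcongr; exact hε x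
    _ = 2 * ‖u (1 - e)‖ * ‖x‖ := by ring

theorem norm_state_sub_character_eq_general
    {A : Type*} [NormedRing A] [StarRing A] [CStarRing A] [NormedAlgebra ℂ A]
    [CompleteSpace A] [StarModule ℂ A]
    (ε : A →L[ℂ] ℂ) (hε1 : ε 1 = 1) (hεm : ∀ x y : A, ε (x * y) = ε x * ε y)
    (e : A) (he0 : e ≠ 0) (hes : star e = e) (he2 : e * e = e)
    (hec : ∀ x : A, e * x = x * e) (heε : ∀ x : A, e * x * e = ε x • e)
    (u : A →L[ℂ] ℂ) (hupos : ∀ x : A, 0 ≤ u (star x * x)) (hu1 : u 1 = 1) :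
    ∃ t : ℝ, u e = (t : ℂ) ∧ 0 ≤ t ∧ t ≤ 1 ∧ ‖u - ε‖ = 2 * (1 - t) := by
  let _ : CStarAlgebra A := {}
  have : Nontrivial A := nontrivial_of_ne e 0 he0
  have he : IsStarProjection e := ⟨he2, hes⟩
  obtain ⟨t, hue, ht0, ht1⟩ := he.exists_apply_eq_ofReal u hupos hu1
  have hεe : ε e = 1 :=
    smul_left_injective ℂ he0 (by rw [← heε, he2, he2, one_smul] : ε e • e = (1 : ℂ) • e)
  have hε : ∀ x, ‖ε x‖ ≤ ‖x‖ := AlgHom.norm_apply_le_self (AlgHom.ofLinearMap ε.toLinearMap hε1 hεm)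
  refine ⟨t, hue, ht0, ht1, le_antisymm ?_ ?_⟩
  · calc ‖u - ε‖ ≤ 2 * ‖u (1 - e)‖ :=
          norm_sub_le_two_mul_norm_apply_one_sub u ε hupos hu1 hε he hec heε
      _ = 2 * (1 - t) := by
          rw [map_sub, hu1, hue, ← Complex.ofReal_one, ← Complex.ofReal_sub,
            Complex.norm_of_nonneg (by linarith)]
  · have hnorm : ‖2 * e - 1‖ = 1 := CStarRing.norm_of_mem_unitary he.two_mul_sub_one_mem_unitary
    have hval : (u - ε) (2 * e - 1) = ((2 * t - 2 : ℝ) : ℂ) := by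
      simp only [sub_apply, map_sub, two_mul, map_add, hue, hεe, hu1, hε1]
      push_cast; ring
    have hle := (u - ε).unit_le_opNorm _ hnorm.le
    rw [hval, Complex.norm_real, Real.norm_eq_abs, abs_of_nonpos (by linarith)] at hle
    linarith

/-- Let `ε` be a character on a unital C*-algebra `A` and let `e` be a nonzero central
projection with `exe = ε(x)e` for all `x`. Then for every state `u` on `A`, `u(e)` is a
real number in `[0,1]` and `‖u − ε‖ = 2(1 − u(e))`. -/
theorem norm_state_sub_character_eq
    {A : Type*} [NormedRing A] [StarRing A] [CStarRing A] [NormedAlgebra ℂ A]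
    [CompleteSpace A] [StarModule ℂ A]
    (ε : A →L[ℂ] ℂ) (hε1 : ε 1 = 1) (hεm : ∀ x y : A, ε (x * y) = ε x * ε y)
    (hεs : ∀ x : A, ε (star x) = starRingEnd ℂ (ε x))
    (e : A) (he0 : e ≠ 0) (hes : star e = e) (he2 : e * e = e)
    (hec : ∀ x : A, e * x = x * e) (heε : ∀ x : A, e * x * e = ε x • e)
    (u : A →L[ℂ] ℂ) (hupos : ∀ x : A, 0 ≤ u (star x * x)) (hu1 : u 1 = 1) :
    ∃ t : ℝ, u e = (t : ℂ) ∧ 0 ≤ t ∧ t ≤ 1 ∧ ‖u - ε‖ = 2 * (1 - t) :=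
  norm_state_sub_character_eq_general ε hε1 hεm e he0 hes he2 hec heε u hupos hu1
end
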